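/- arXiv:2310.14392 — 4 statements merged into one kernel-verified Lean document; each statement's English description precedes it below -/
import Mathlib

section
/- Define W₂ = 2·(1+W₁)/(2+W₁) with W₁ = 1, and recursively Wₙ = n·(1+W_{n−1})/(n+W_{n−1}) for n ≥ 2. Then for all n ≥ 2, Wₙ > √n − 1/4. -/
/-! The map `w ↦ n(1+w)/(n+w)` is increasing for `w > -n`, so by induction (already from
`W₁ = 1 > √1 - 1/4`) it suffices that it sends `√(n-1) - 1/4` above `√n - 1/4`. With `s = √(n-1)`
and `t = √n`, clearing denominators turns this into `t³ - t² - t/4 + 1/16 < s (t - 1/2)²`; squaring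
and using `s² = t² - 1` leaves `7t³/8 - 11t²/8 + 17t/32 - 17/256 > 0`, which holds for `t ≥ √2`. -/

open Real Set

theorem strictMonoOn_mul_one_add_div_add {x : ℝ} (hx : 1 < x) :
    StrictMonoOn (fun w => x * (1 + w) / (x + w)) (Ioi (-x)) := by
  intro a ha b hb hab
  simp only [mem_Ioi] at ha hb
  rw [div_lt_div_iff₀ (by linarith) (by linarith)]
  nlinarith [mul_pos (mul_pos (by linarith : (0 : ℝ) < x) (sub_pos.2 hab)) (sub_pos.2 hx)]

theorem cubic_lt_mul_sub_half_sq {s t : ℝ} (ht0 : 0 ≤ t) (ht : 2 ≤ t ^ 2) (hs : 0 ≤ s)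
    (hst : s ^ 2 = t ^ 2 - 1) :
    t ^ 3 - t ^ 2 - t / 4 + 1 / 16 < s * (t - 1 / 2) ^ 2 := by
  have ht1 : 1 ≤ t := by nlinarith
  refine lt_of_pow_lt_pow_left₀ 2 (by positivity) ?_
  have hsq : (s * (t - 1 / 2) ^ 2) ^ 2 - (t ^ 3 - t ^ 2 - t / 4 + 1 / 16) ^ 2
      = 7 / 8 * t ^ 3 - 11 / 8 * t ^ 2 + 17 / 32 * t - 17 / 256 := by
    linear_combination (t - 1 / 2) ^ 4 * hst
  nlinarith [sq_nonneg (t - 1)]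

theorem sqrt_sub_quarter_lt_mul_one_add_div_add {x : ℝ} (hx : 2 ≤ x) :
    √x - 1 / 4 < x * (1 + (√(x - 1) - 1 / 4)) / (x + (√(x - 1) - 1 / 4)) := by
  have hs : √(x - 1) ^ 2 = x - 1 := sq_sqrt (by linarith)
  have ht : √x ^ 2 = x := sq_sqrt (by linarith)
  have hs1 : 1 ≤ √(x - 1) := by nlinarith [sqrt_nonneg (x - 1)]
  rw [lt_div_iff₀ (by linarith)]
  nlinarith [cubic_lt_mul_sub_half_sq (sqrt_nonneg x) (hx.trans ht.ge) (sqrt_nonneg _)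
    (by rw [hs, ht])]

/-- The total-biomass recursion `W₁ = 1`, `Wₙ = n(1+W_{n-1})/(n+W_{n-1})` of the
perfectly unbalanced tree satisfies `Wₙ > √n - 1/4` for all `n ≥ 2`. -/
theorem stmt4 (W : ℕ → ℝ) (hW1 : W 1 = 1)
    (hWrec : ∀ n, 2 ≤ n → W n = n * (1 + W (n - 1)) / (n + W (n - 1))) :
    ∀ n : ℕ, 2 ≤ n → Real.sqrt (n : ℝ) - 1 / 4 < W n := by
  suffices h : ∀ n : ℕ, 1 ≤ n → √(n : ℝ) - 1 / 4 < W n from fun n hn ↦ h n (by omega)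
  intro n hn
  induction n, hn using Nat.le_induction with
  | base => norm_num [hW1]
  | succ n hn ih =>
    have hx : (2 : ℝ) ≤ (n + 1 : ℕ) := by exact_mod_cast Nat.succ_le_succ hn
    have hprev : ((n + 1 : ℕ) : ℝ) - 1 = n := by push_cast; ring
    rw [hWrec (n + 1) (by omega), Nat.add_sub_cancel]
    refine (sqrt_sub_quarter_lt_mul_one_add_div_add hx).trans ?_
    rw [hprev]
    have hn1 : (1 : ℝ) ≤ n := by exact_mod_cast hn
    have hlo : -((n + 1 : ℕ) : ℝ) < √(n : ℝ) - 1 / 4 := by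
      push_cast; linarith [sqrt_nonneg (n : ℝ)]
    exact strictMonoOn_mul_one_add_div_add (by linarith) hlo (hlo.trans ih) ih
end

section
/- Let x* be a saturated equilibrium for growth vector r = κ·1 (κ > 0) and symmetric positive definite matrix A, and let μ > 0. Then y = κ x* / (κ + μ·1ᵀx*) is a saturated equilibrium for (κ·1, A + μ 11ᵀ), with the same support as x*. -/
/-!
Adding `μ 11ᵀ` lowers every fitness `κ - (B y)ᵢ` by the same amount `μ 1ᵀy`. For `y = c x`
with `c (κ + μ 1ᵀx) = κ` this shift is absorbed exactly, so the fitness vector of `y` under `B`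
is `c` times that of `x` under `A`; a positive rescaling preserves all the equilibrium
conditions and the support.
-/

open Matrix

structure IsSaturatedEquilibrium {ι : Type*} [Fintype ι] (r : ι → ℝ) (B : Matrix ι ι ℝ)
    (x : ι → ℝ) : Prop where
  nonneg : ∀ i, 0 ≤ x i
  complementary : ∀ i, x i * (r i - (B *ᵥ x) i) = 0
  saturated : ∀ i, x i = 0 → r i - (B *ᵥ x) i ≤ 0

namespace IsSaturatedEquilibrium

variable {ι : Type*} [Fintype ι] {r r' : ι → ℝ} {A B : Matrix ι ι ℝ} {x : ι → ℝ} {c : ℝ}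

theorem smul_of_fitness_eq (hx : IsSaturatedEquilibrium r A x) (hc : 0 < c)
    (hfit : ∀ i, r' i - (B *ᵥ (c • x)) i = c * (r i - (A *ᵥ x) i)) :
    IsSaturatedEquilibrium r' B (c • x) where
  nonneg i := smul_nonneg hc.le (hx.nonneg i)
  complementary i := by
    rw [hfit, Pi.smul_apply, smul_eq_mul]
    linear_combination c * c * hx.complementary i
  saturated i hi := by
    have hxi : x i = 0 := (smul_eq_zero.1 hi).resolve_left hc.ne'
    rw [hfit]
    exact mul_nonpos_of_nonneg_of_nonpos hc.le (hx.saturated i hxi)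

end IsSaturatedEquilibrium

theorem ones_mulVec {ι : Type*} [Fintype ι] (x : ι → ℝ) :
    (of fun _ _ : ι => (1 : ℝ)) *ᵥ x = fun _ => ∑ j, x j := by
  ext i
  simp [mulVec, dotProduct]

theorem sub_add_smul_ones_mulVec_smul {ι : Type*} [Fintype ι] (A : Matrix ι ι ℝ)
    {κ μ c : ℝ} {x : ι → ℝ} (hc : c * (κ + μ * ∑ j, x j) = κ) (i : ι) :
    κ - ((A + μ • of fun _ _ : ι => (1 : ℝ)) *ᵥ (c • x)) i = c * (κ - (A *ᵥ x) i) := by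
  simp only [add_mulVec, smul_mulVec, mulVec_smul, ones_mulVec, Pi.add_apply,
    Pi.smul_apply, smul_eq_mul]
  linear_combination -hc

theorem stmt16_general {n : ℕ} (A : Matrix (Fin n) (Fin n) ℝ)
    (κ : ℝ) (hκ : 0 < κ) (μ : ℝ) (hμ : 0 < μ) (x : Fin n → ℝ)
    (hpos : ∀ i, 0 ≤ x i)
    (hcomp : ∀ i, x i * (κ - A.mulVec x i) = 0)
    (hsat : ∀ i, x i = 0 → κ - A.mulVec x i ≤ 0)
    (B : Matrix (Fin n) (Fin n) ℝ)
    (hB : B = A + μ • Matrix.of (fun _ _ : Fin n => (1 : ℝ)))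
    (y : Fin n → ℝ) (hy : y = (κ / (κ + μ * ∑ i, x i)) • x) :
    (∀ i, 0 ≤ y i) ∧
      (∀ i, y i * (κ - B.mulVec y i) = 0) ∧
      (∀ i, y i = 0 → κ - B.mulVec y i ≤ 0) ∧
      (∀ i, 0 < y i ↔ 0 < x i) := by
  have hden : 0 < κ + μ * ∑ i, x i := by
    have := Finset.sum_nonneg fun i (_ : i ∈ Finset.univ) => hpos i
    positivity
  have hc : 0 < κ / (κ + μ * ∑ i, x i) := div_pos hκ hden
  have hx : IsSaturatedEquilibrium (fun _ => κ) A x := ⟨hpos, hcomp, hsat⟩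
  have hy' : IsSaturatedEquilibrium (fun _ => κ) B y := by
    subst hB hy
    exact hx.smul_of_fitness_eq hc
      (sub_add_smul_ones_mulVec_smul A (div_mul_cancel₀ κ hden.ne'))
  refine ⟨hy'.nonneg, hy'.complementary, hy'.saturated, fun i => ?_⟩
  rw [hy, Pi.smul_apply]
  exact smul_pos_iff_of_pos_left hc

/-- If `x*` is a saturated equilibrium for growth vector `κ·1` (κ > 0) and
symmetric positive definite `A`, and `μ > 0`, then
`y = κ x* / (κ + μ 1ᵀx*)` is a saturated equilibrium for
`(κ·1, A + μ 11ᵀ)` with the same support. -/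
theorem stmt16 {n : ℕ} (A : Matrix (Fin n) (Fin n) ℝ) (hA : A.PosDef)
    (κ : ℝ) (hκ : 0 < κ) (μ : ℝ) (hμ : 0 < μ) (x : Fin n → ℝ)
    (hpos : ∀ i, 0 ≤ x i)
    (hcomp : ∀ i, x i * (κ - A.mulVec x i) = 0)
    (hsat : ∀ i, x i = 0 → κ - A.mulVec x i ≤ 0)
    (B : Matrix (Fin n) (Fin n) ℝ)
    (hB : B = A + μ • Matrix.of (fun _ _ : Fin n => (1 : ℝ)))
    (y : Fin n → ℝ) (hy : y = (κ / (κ + μ * ∑ i, x i)) • x) :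
    (∀ i, 0 ≤ y i) ∧
      (∀ i, y i * (κ - B.mulVec y i) = 0) ∧
      (∀ i, y i = 0 → κ - B.mulVec y i ≤ 0) ∧
      (∀ i, 0 < y i ↔ 0 < x i) :=
  stmt16_general A κ hκ μ hμ x hpos hcomp hsat B hB y hy
end

section
/- Let A be an n×n symmetric positive definite matrix, r ∈ ℝⁿ, and suppose x̂ is a saturated equilibrium with support S = {i : x̂ᵢ > 0} such that strict non-invasibility holds: (r − A x̂)ᵢ < 0 for all i ∉ S. Then the function V(x) = Σᵢ (xᵢ − x̂ᵢ log xᵢ), defined on the open positive orthant, satisfies: the derivative of V along trajectories of dxᵢ/dt = xᵢ(r − A x)ᵢ equals −(x − x̂)ᵀA(x − x̂) + Σ_{i∉S} xᵢ·(r − A x̂)ᵢ, which is ≤ 0 for all x in the positive orthant, with equality if and only if x = x̂. -/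
open Matrix

/-!
Writing `A x = A x̂ + A (x - x̂)`, the `i`-th term of `V̇` becomes
`(xᵢ - x̂ᵢ)(r - A x̂)ᵢ - (xᵢ - x̂ᵢ)(A (x - x̂))ᵢ`. Summing, the second part gives the quadratic form
`-(x - x̂)ᵀ A (x - x̂)`, while in the first part the terms with `i ∈ S` vanish by the equilibrium
condition and those with `i ∉ S` reduce to `xᵢ (r - A x̂)ᵢ < 0`. Both parts are `≤ 0`, so `V̇ = 0`
forces the quadratic form to vanish, i.e. `x = x̂` by positive definiteness.
-/

theorem Matrix.PosDef.dotProduct_mulVec_self_eq_zero_iff {n R : Type*} [Fintype n]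
    [CommRing R] [PartialOrder R] [StarRing R] {M : Matrix n n R} (hM : M.PosDef) {v : n → R} :
    star v ⬝ᵥ M *ᵥ v = 0 ↔ v = 0 := by
  refine ⟨fun h => ?_, fun h => by simp [h]⟩
  by_contra hv
  exact (hM.dotProduct_mulVec_pos hv).ne' h

section LotkaVolterra

variable {ι : Type*} [Fintype ι]

theorem sum_lotkaVolterra_lyapunov_deriv {K : Type*} [Field K] (A : Matrix ι ι K)
    (r x xh : ι → K) (hx : ∀ i, x i ≠ 0) :
    ∑ i, (1 - xh i / x i) * (x i * (r i - (A *ᵥ x) i)) =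
      -((x - xh) ⬝ᵥ A *ᵥ (x - xh)) + ∑ i, (x i - xh i) * (r i - (A *ᵥ xh) i) := by
  have hsplit : A *ᵥ x = A *ᵥ xh + A *ᵥ (x - xh) := by rw [← mulVec_add, add_sub_cancel]
  have hterm : ∀ i, (1 - xh i / x i) * (x i * (r i - (A *ᵥ x) i)) =
      (x i - xh i) * (r i - (A *ᵥ xh) i) - (x i - xh i) * (A *ᵥ (x - xh)) i := by
    intro i
    rw [hsplit, Pi.add_apply]
    field_simp [hx i]
    ring
  simp only [hterm, Finset.sum_sub_distrib, dotProduct, Pi.sub_apply]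
  ring

variable (A : Matrix ι ι ℝ) (r xh : ι → ℝ)

theorem sum_sub_mul_eq_sum_ite_of_saturated (hpos : ∀ i, 0 ≤ xh i)
    (heq : ∀ i, 0 < xh i → r i - (A *ᵥ xh) i = 0) (x : ι → ℝ) :
    ∑ i, (x i - xh i) * (r i - (A *ᵥ xh) i) =
      ∑ i, if xh i = 0 then x i * (r i - (A *ᵥ xh) i) else 0 := by
  refine Finset.sum_congr rfl fun i _ => ?_
  split_ifs with h
  · rw [h, sub_zero]
  · rw [heq i ((hpos i).lt_of_ne' h), mul_zero]

theorem sum_ite_nonpos_of_noninvadable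
    (hninv : ∀ i, xh i = 0 → r i - (A *ᵥ xh) i < 0) {x : ι → ℝ} (hx : ∀ i, 0 < x i) :
    ∑ i, (if xh i = 0 then x i * (r i - (A *ᵥ xh) i) else 0) ≤ 0 := by
  refine Finset.sum_nonpos fun i _ => ?_
  split_ifs with h
  · exact (mul_neg_of_pos_of_neg (hx i) (hninv i h)).le
  · exact le_rfl

end LotkaVolterra

/-- Lyapunov function computation: for a saturated equilibrium `x̂` with strict
non-invasibility, the derivative of `V(x) = Σᵢ (xᵢ - x̂ᵢ log xᵢ)` along
trajectories of the Lotka-Volterra system equals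
`-(x - x̂)ᵀ A (x - x̂) + Σ_{i : x̂ᵢ = 0} xᵢ (r - A x̂)ᵢ`,
which is `≤ 0` on the positive orthant, with equality iff `x = x̂`. -/
theorem stmt17 {n : ℕ} (A : Matrix (Fin n) (Fin n) ℝ) (hA : A.PosDef)
    (r xh : Fin n → ℝ)
    (hpos : ∀ i, 0 ≤ xh i)
    (heq : ∀ i, 0 < xh i → r i - A.mulVec xh i = 0)
    (hninv : ∀ i, xh i = 0 → r i - A.mulVec xh i < 0) :
    ∀ x : Fin n → ℝ, (∀ i, 0 < x i) →
      (∑ i, (1 - xh i / x i) * (x i * (r i - A.mulVec x i)) =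
          -((fun i => x i - xh i) ⬝ᵥ A.mulVec (fun i => x i - xh i)) +
            ∑ i, (if xh i = 0 then x i * (r i - A.mulVec xh i) else 0)) ∧
      (-((fun i => x i - xh i) ⬝ᵥ A.mulVec (fun i => x i - xh i)) +
          ∑ i, (if xh i = 0 then x i * (r i - A.mulVec xh i) else 0) ≤ 0) ∧
      (-((fun i => x i - xh i) ⬝ᵥ A.mulVec (fun i => x i - xh i)) +
          ∑ i, (if xh i = 0 then x i * (r i - A.mulVec xh i) else 0) = 0 ↔
        x = xh) := by
  intro x hx
  have hderiv := sum_lotkaVolterra_lyapunov_deriv A r x xh fun i => (hx i).ne'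
  rw [sum_sub_mul_eq_sum_ite_of_saturated A r xh hpos heq x] at hderiv
  have hquad : 0 ≤ (x - xh) ⬝ᵥ A *ᵥ (x - xh) := hA.posSemidef.dotProduct_mulVec_nonneg _
  have hsum := sum_ite_nonpos_of_noninvadable A r xh hninv hx
  refine ⟨hderiv, neg_add_nonpos_iff.mpr (hsum.trans hquad), fun h0 => ?_, ?_⟩
  · have hquad0 : (x - xh) ⬝ᵥ A *ᵥ (x - xh) = 0 := by
      change -((x - xh) ⬝ᵥ A *ᵥ (x - xh)) + _ = 0 at h0
      linarith
    exact sub_eq_zero.mp (hA.dotProduct_mulVec_self_eq_zero_iff.mp hquad0)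
  · rintro rfl
    simp [(hx _).ne']
end

section
/- Let Σ be the n×n covariance matrix induced by an ultrametric rooted phylogenetic tree, constructed recursively: either Σ is a 1×1 positive matrix, or Σ = blockdiag(Σ̃₁,…,Σ̃ₘ) + t·11ᵀ where t > 0 and each Σ̃ₖ is itself (inductively) such that the system Σ̃ₖ xₖ = 1 has a solution with all entries strictly positive. Then the system Σ x = 1 has a solution with all entries strictly positive. -/
open Matrix

/-- The class of covariance matrices induced by ultrametric rooted phylogenetic
trees: either a positive 1×1 matrix, or a block diagonal of such matrices plus
`t > 0` times the all-ones matrix. -/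
inductive TreeCov : {ι : Type} → Matrix ι ι ℝ → Prop
  | base (c : ℝ) (hc : 0 < c) : TreeCov (Matrix.of fun _ _ : Fin 1 => c)
  | node {m : ℕ} (sz : Fin m → ℕ)
      (M : ∀ k, Matrix (Fin (sz k)) (Fin (sz k)) ℝ) (t : ℝ) (ht : 0 < t)
      (h : ∀ k, TreeCov (M k)) :
      TreeCov (Matrix.blockDiagonal' M + t • Matrix.of (fun _ _ => (1 : ℝ)))

/-!
If `Σ̃ₖ yₖ = 1` for every block, then the concatenation `y` solves `blockdiag(Σ̃ₖ) y = 1`, and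
since `(t • 11ᵀ) y = t (1ᵀy) 1`, the rescaled vector `y / (1 + t 1ᵀy)` solves
`(blockdiag(Σ̃ₖ) + t • 11ᵀ) x = 1`. Positivity survives the rescaling, so induction on the tree
gives the theorem.
-/

namespace Matrix

theorem blockDiagonal'_mulVec_apply {o : Type*} [Fintype o] [DecidableEq o] {m : o → Type*}
    [∀ k, Fintype (m k)] {α : Type*} [NonUnitalNonAssocSemiring α]
    (M : ∀ k, Matrix (m k) (m k) α) (x : (Σ k, m k) → α) (k : o) (i : m k) :
    (blockDiagonal' M *ᵥ x) ⟨k, i⟩ = (M k *ᵥ fun j => x ⟨k, j⟩) i := by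
  simp only [mulVec, dotProduct, Fintype.sum_sigma]
  rw [Finset.sum_eq_single k]
  · simp only [blockDiagonal'_apply_eq]
  · intro k' _ hk'
    exact Finset.sum_eq_zero fun j _ => by
      rw [blockDiagonal'_apply_ne _ _ _ (Ne.symm hk'), zero_mul]
  · exact fun hk => absurd (Finset.mem_univ k) hk

theorem of_const_one_mulVec {n : Type*} [Fintype n] {α : Type*} [NonAssocSemiring α]
    (x : n → α) : (of fun _ _ : n => (1 : α)) *ᵥ x = fun _ => ∑ i, x i := by
  ext
  simp [mulVec, dotProduct]

theorem add_smul_of_const_one_mulVec_eq_one {n : Type*} [Fintype n] {K : Type*} [Field K]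
    {A : Matrix n n K} {y : n → K} (hy : A *ᵥ y = fun _ => 1) (t : K)
    (hne : 1 + t * ∑ i, y i ≠ 0) :
    (A + t • of fun _ _ => (1 : K)) *ᵥ ((1 + t * ∑ i, y i)⁻¹ • y) = fun _ => 1 := by
  rw [mulVec_smul, add_mulVec, hy, smul_mulVec, of_const_one_mulVec]
  ext
  simp only [Pi.smul_apply, Pi.add_apply, smul_eq_mul]
  field_simp

end Matrix

/-- Full coexistence in the deterministic limit: for any tree-induced
covariance matrix `Σ`, the system `Σ x = 1` has a solution with all entries
strictly positive. -/
theorem stmt19 {ι : Type} [Fintype ι] (S : Matrix ι ι ℝ) (h : TreeCov S) :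
    ∃ x : ι → ℝ, S.mulVec x = (fun _ => 1) ∧ ∀ i, 0 < x i := by
  revert ‹Fintype ι›
  induction h with
  | base c hc =>
    intro inst
    cases Subsingleton.elim inst (inferInstance : Fintype (Fin 1))
    refine ⟨fun _ => c⁻¹, ?_, fun _ => inv_pos.mpr hc⟩
    ext
    simp [mulVec, dotProduct, hc.ne']
  | node sz M t ht _ ih =>
    intro inst
    cases Subsingleton.elim inst Sigma.instFintype
    choose y hy hpos using fun k => ih k
    set z : (Σ k, Fin (sz k)) → ℝ := fun p => y p.1 p.2
    have hz : blockDiagonal' M *ᵥ z = fun _ => 1 := by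
      ext ⟨k, i⟩
      rw [blockDiagonal'_mulVec_apply]
      exact congrFun (hy k) i
    have hsum : 0 ≤ ∑ p, z p := Finset.sum_nonneg fun p _ => (hpos p.1 p.2).le
    have hscale : 0 < 1 + t * ∑ p, z p := by positivity
    exact ⟨_, add_smul_of_const_one_mulVec_eq_one hz t hscale.ne',
      fun ⟨k, i⟩ => mul_pos (inv_pos.mpr hscale) (hpos k i)⟩
end
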